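/- Let $M, b > 1$ and $\kappa, \delta > 0$, and set $\sigma = \min\{\kappa, \delta\}$. Suppose $(Y_h)_{h \ge 0}$ and $(Z_h)_{h \ge 0}$ are sequences of nonnegative reals satisfying $Y_{h+1} \le M b^h (Y_h^{1+\delta} + Z_h^{1+\kappa} Y_h^{\delta})$ and $Z_{h+1} \le M b^h (Y_h + Z_h^{1+\kappa})$ for all $h$. If $Y_0 + Z_0^{1+\kappa} \le (2M)^{-(1+\kappa)/\sigma} b^{-(1+\kappa)/\sigma^2}$, then $Y_h \to 0$ and $Z_h \to 0$ as $h \to \infty$. -/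
import Mathlib


open Filter

theorem stmt0 (M b κ δ : ℝ) (hM : 1 < M) (hb : 1 < b) (hκ : 0 < κ) (hδ : 0 < δ)
    (σ : ℝ) (hσ : σ = min κ δ)
    (Y Z : ℕ → ℝ) (hYnn : ∀ h, 0 ≤ Y h) (hZnn : ∀ h, 0 ≤ Z h)
    (hYrec : ∀ h : ℕ, Y (h+1) ≤ M * b ^ h * (Y h ^ (1+δ) + Z h ^ (1+κ) * Y h ^ δ))
    (hZrec : ∀ h : ℕ, Z (h+1) ≤ M * b ^ h * (Y h + Z h ^ (1+κ)))
    (hinit : Y 0 + Z 0 ^ (1+κ) ≤ (2*M) ^ (-(1+κ)/σ) * b ^ (-(1+κ)/σ^2)) :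
    Tendsto Y atTop (nhds 0) ∧ Tendsto Z atTop (nhds 0) := by
  have hσpos : 0 < σ := hσ ▸ lt_min hκ hδ
  have hσne : σ ≠ 0 := hσpos.ne'
  have hσκ : σ ≤ κ := hσ ▸ min_le_left _ _
  have hσδ : σ ≤ δ := hσ ▸ min_le_right _ _
  have hbpos : (0:ℝ) < b := by linarith
  have hMpos : (0:ℝ) < M := by linarith
  have h2M : (1:ℝ) < 2*M := by linarith
  have h2Mpos : (0:ℝ) < 2*M := by linarith
  set A : ℝ := (2*M) ^ (-(1+κ)/σ) * b ^ (-(1+κ)/σ^2) with hA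
  have hApos : 0 < A := by
    apply mul_pos <;> exact Real.rpow_pos_of_pos (by linarith) _
  have hA1 : A ≤ 1 := by
    have h1 : (2*M) ^ (-(1+κ)/σ) ≤ 1 :=
      Real.rpow_le_one_of_one_le_of_nonpos h2M.le
        (div_nonpos_iff.2 (Or.inr ⟨by linarith, hσpos.le⟩))
    have h2 : b ^ (-(1+κ)/σ^2) ≤ 1 :=
      Real.rpow_le_one_of_one_le_of_nonpos hb.le
        (div_nonpos_iff.2 (Or.inr ⟨by linarith, by positivity⟩))
    calc A ≤ 1 * 1 :=
          mul_le_mul h1 h2 (Real.rpow_nonneg (by linarith) _) zero_le_one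
      _ = 1 := by ring
  set E : ℕ → ℝ := fun h => Y h + Z h ^ (1+κ) with hE
  have hEnn : ∀ h, 0 ≤ E h := fun h => add_nonneg (hYnn h) (Real.rpow_nonneg (hZnn h) _)
  have key : ∀ h : ℕ, E h ≤ A * b ^ (-(1+κ)*h/σ) := by
    intro h
    induction h with
    | zero =>
      simpa using hinit
    | succ h ih =>
      have hbh1 : (1:ℝ) ≤ b ^ h := one_le_pow₀ hb.le
      have hB1 : (1:ℝ) ≤ M * b ^ h := one_le_mul_of_one_le_of_one_le hM.le hbh1
      have hBpos : (0:ℝ) < M * b ^ h := by positivity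
      have hEh1 : E h ≤ 1 := by
        refine ih.trans ?_
        have hexp : -(1+κ)*(h:ℝ)/σ ≤ 0 := by
          have h0 : (0:ℝ) ≤ (1+κ)*h := by positivity
          exact div_nonpos_iff.2 (Or.inr ⟨by linarith, hσpos.le⟩)
        calc A * b ^ (-(1+κ)*(h:ℝ)/σ) ≤ 1 * 1 :=
              mul_le_mul hA1 (Real.rpow_le_one_of_one_le_of_nonpos hb.le hexp)
                (Real.rpow_nonneg hbpos.le _) zero_le_one
          _ = 1 := by ring
      have hRHSpos : 0 < A * b ^ (-(1+κ)*((h+1:ℕ):ℝ)/σ) :=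
        mul_pos hApos (Real.rpow_pos_of_pos hbpos _)
      rcases eq_or_lt_of_le (hEnn h) with hE0 | hEpos
      · -- E h = 0 : then Y h = 0, Z h = 0, hence E (h+1) = 0
        have hY0 : Y h = 0 := by
          have := Real.rpow_nonneg (hZnn h) (1+κ)
          have hEh0 : Y h + Z h ^ (1+κ) = 0 := hE0.symm
          nlinarith [hYnn h]
        have hZ0 : Z h = 0 := by
          have hz : Z h ^ (1+κ) = 0 := by
            have hEh0 : Y h + Z h ^ (1+κ) = 0 := hE0.symm
            nlinarith [hYnn h, Real.rpow_nonneg (hZnn h) (1+κ)]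
          exact (Real.rpow_eq_zero (hZnn h) (by positivity)).1 hz
        have hY1 : Y (h+1) ≤ 0 := by
          have := hYrec h
          rw [hY0, hZ0] at this
          simpa [Real.zero_rpow (show (1:ℝ)+δ ≠ 0 by positivity),
            Real.zero_rpow (show (1:ℝ)+κ ≠ 0 by positivity),
            Real.zero_rpow hδ.ne'] using this
        have hZ1 : Z (h+1) ≤ 0 := by
          have := hZrec h
          rw [hY0, hZ0] at this
          simpa [Real.zero_rpow (show (1:ℝ)+κ ≠ 0 by positivity)] using this
        have hY1' : Y (h+1) = 0 := le_antisymm hY1 (hYnn _)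
        have hZ1' : Z (h+1) = 0 := le_antisymm hZ1 (hZnn _)
        have hE1' : E (h+1) = 0 := by
          simp [hE, hY1', hZ1', Real.zero_rpow (show (1:ℝ)+κ ≠ 0 by positivity)]
        rw [hE1']
        exact hRHSpos.le
      · -- main case : E h > 0
        have hstepY : Y (h+1) ≤ M * b ^ h * E h ^ ((1:ℝ)+δ) := by
          refine (hYrec h).trans ?_
          apply mul_le_mul_of_nonneg_left _ hBpos.le
          have e1 : Y h ^ ((1:ℝ)+δ) = Y h * Y h ^ δ := by
            rw [Real.rpow_add' (hYnn h) (by positivity), Real.rpow_one]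
          have e2 : E h ^ ((1:ℝ)+δ) = E h * E h ^ δ := by
            rw [Real.rpow_add' (hEnn h) (by positivity), Real.rpow_one]
          rw [e1, e2]
          have hYE : Y h ≤ E h := le_add_of_nonneg_right (Real.rpow_nonneg (hZnn h) _)
          have hYEδ : Y h ^ δ ≤ E h ^ δ := Real.rpow_le_rpow (hYnn h) hYE hδ.le
          calc Y h * Y h ^ δ + Z h ^ (1+κ) * Y h ^ δ
              = E h * Y h ^ δ := by rw [hE]; ring
            _ ≤ E h * E h ^ δ := mul_le_mul_of_nonneg_left hYEδ (hEnn h)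
        have hstepZ : Z (h+1) ^ ((1:ℝ)+κ) ≤ (M * b ^ h) ^ ((1:ℝ)+κ) * E h ^ ((1:ℝ)+κ) := by
          have h1 : Z (h+1) ≤ M * b ^ h * E h := hZrec h
          have h2 := Real.rpow_le_rpow (hZnn _) h1 (by positivity : (0:ℝ) ≤ 1+κ)
          rwa [Real.mul_rpow hBpos.le (hEnn h)] at h2
        have hEδσ : E h ^ ((1:ℝ)+δ) ≤ E h ^ ((1:ℝ)+σ) :=
          Real.rpow_le_rpow_of_exponent_ge hEpos hEh1 (by linarith)
        have hEκσ : E h ^ ((1:ℝ)+κ) ≤ E h ^ ((1:ℝ)+σ) :=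
          Real.rpow_le_rpow_of_exponent_ge hEpos hEh1 (by linarith)
        have hBB : M * b ^ h ≤ (M * b ^ h) ^ ((1:ℝ)+κ) := by
          calc M * b ^ h = (M * b ^ h) ^ (1:ℝ) := (Real.rpow_one _).symm
            _ ≤ (M * b ^ h) ^ ((1:ℝ)+κ) :=
              Real.rpow_le_rpow_of_exponent_le hB1 (by linarith)
        have hcomb : E (h+1) ≤ 2 * (M * b ^ h) ^ ((1:ℝ)+κ) * E h ^ ((1:ℝ)+σ) := by
          have t1 : Y (h+1) ≤ (M * b ^ h) ^ ((1:ℝ)+κ) * E h ^ ((1:ℝ)+σ) :=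
            hstepY.trans (mul_le_mul hBB hEδσ (Real.rpow_nonneg (hEnn h) _)
              (Real.rpow_nonneg hBpos.le _))
          have t2 : Z (h+1) ^ ((1:ℝ)+κ) ≤ (M * b ^ h) ^ ((1:ℝ)+κ) * E h ^ ((1:ℝ)+σ) :=
            hstepZ.trans (mul_le_mul_of_nonneg_left hEκσ (Real.rpow_nonneg hBpos.le _))
          calc E (h+1) = Y (h+1) + Z (h+1) ^ ((1:ℝ)+κ) := rfl
            _ ≤ (M * b ^ h) ^ ((1:ℝ)+κ) * E h ^ ((1:ℝ)+σ)
                + (M * b ^ h) ^ ((1:ℝ)+κ) * E h ^ ((1:ℝ)+σ) := add_le_add t1 t2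
            _ = 2 * (M * b ^ h) ^ ((1:ℝ)+κ) * E h ^ ((1:ℝ)+σ) := by ring
        have hsplit : 2 * (M * b ^ h) ^ ((1:ℝ)+κ)
            ≤ (2*M) ^ ((1:ℝ)+κ) * ((b:ℝ) ^ h) ^ ((1:ℝ)+κ) := by
          have h2le : (2:ℝ) ≤ (2:ℝ) ^ ((1:ℝ)+κ) := by
            calc (2:ℝ) = (2:ℝ) ^ (1:ℝ) := (Real.rpow_one _).symm
              _ ≤ (2:ℝ) ^ ((1:ℝ)+κ) :=
                Real.rpow_le_rpow_of_exponent_le (by norm_num) (by linarith)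
          calc 2 * (M * b ^ h) ^ ((1:ℝ)+κ)
              ≤ (2:ℝ) ^ ((1:ℝ)+κ) * (M * b ^ h) ^ ((1:ℝ)+κ) :=
                mul_le_mul_of_nonneg_right h2le (Real.rpow_nonneg hBpos.le _)
            _ = (2*M) ^ ((1:ℝ)+κ) * ((b:ℝ) ^ h) ^ ((1:ℝ)+κ) := by
                rw [Real.mul_rpow hMpos.le (by positivity),
                  Real.mul_rpow (by norm_num : (0:ℝ) ≤ 2) hMpos.le]
                ring
        have hEσmono : E h ^ ((1:ℝ)+σ) ≤ (A * b ^ (-(1+κ)*(h:ℝ)/σ)) ^ ((1:ℝ)+σ) :=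
          Real.rpow_le_rpow (hEnn h) ih (by positivity)
        have hmain : E (h+1) ≤ (2*M) ^ ((1:ℝ)+κ) * ((b:ℝ) ^ h) ^ ((1:ℝ)+κ)
            * (A * b ^ (-(1+κ)*(h:ℝ)/σ)) ^ ((1:ℝ)+σ) :=
          hcomb.trans (mul_le_mul hsplit hEσmono (Real.rpow_nonneg (hEnn h) _)
            (by positivity))
        refine hmain.trans_eq ?_
        -- exponent computation, pure rpow algebra with positive bases
        have hbh : ((b:ℝ) ^ h) = b ^ (h : ℝ) := (Real.rpow_natCast b h).symm
        rw [hbh, hA]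
        rw [Real.mul_rpow (by positivity) (by positivity : (0:ℝ) ≤ b ^ (-(1+κ)*(h:ℝ)/σ)),
          Real.mul_rpow (by positivity) (by positivity : (0:ℝ) ≤ b ^ (-(1+κ)/σ^2))]
        push_cast
        rw [← Real.rpow_mul h2Mpos.le, ← Real.rpow_mul hbpos.le,
          ← Real.rpow_mul hbpos.le, ← Real.rpow_mul hbpos.le]
        simp only [Real.rpow_def_of_pos h2Mpos, Real.rpow_def_of_pos hbpos, ← Real.exp_add]
        rw [Real.exp_eq_exp]
        field_simp
        ring
  -- Conclusions from the key decay estimate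
  have hrneg : -(1+κ)/σ < 0 := div_neg_of_neg_of_pos (by linarith) hσpos
  have hr1 : b ^ (-(1+κ)/σ) < 1 := Real.rpow_lt_one_of_one_lt_of_neg hb hrneg
  have hrnn : 0 ≤ b ^ (-(1+κ)/σ) := Real.rpow_nonneg hbpos.le _
  have hg : Tendsto (fun h : ℕ => A * (b ^ (-(1+κ)/σ)) ^ h) atTop (nhds 0) := by
    have := (tendsto_pow_atTop_nhds_zero_of_lt_one hrnn hr1).const_mul A
    simpa using this
  have hbound : ∀ h : ℕ, A * b ^ (-(1+κ)*(h:ℝ)/σ) = A * (b ^ (-(1+κ)/σ)) ^ h := by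
    intro h
    rw [← Real.rpow_natCast (b ^ (-(1+κ)/σ)) h, ← Real.rpow_mul hbpos.le]
    congr 2
    ring
  have hEt : Tendsto E atTop (nhds 0) :=
    squeeze_zero hEnn (fun h => (key h).trans_eq (hbound h)) hg
  have hYt : Tendsto Y atTop (nhds 0) :=
    squeeze_zero hYnn
      (fun h => le_add_of_nonneg_right (Real.rpow_nonneg (hZnn h) _)) hEt
  have hZpt : Tendsto (fun h => Z h ^ ((1:ℝ)+κ)) atTop (nhds 0) :=
    squeeze_zero (fun h => Real.rpow_nonneg (hZnn h) _)
      (fun h => le_add_of_nonneg_left (hYnn h)) hEt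
  have hZt : Tendsto Z atTop (nhds 0) := by
    have h1 := hZpt.rpow_const (p := ((1:ℝ)+κ)⁻¹) (Or.inr (by positivity))
    have h2 : (fun h => (Z h ^ ((1:ℝ)+κ)) ^ ((1:ℝ)+κ)⁻¹) = Z := by
      funext h
      rw [← Real.rpow_mul (hZnn h), mul_inv_cancel₀ (by positivity), Real.rpow_one]
    rwa [h2, Real.zero_rpow (by positivity)] at h1
  exact ⟨hYt, hZt⟩
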